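/- Let G be a connected graph and D a dominating set of G. Define the auxiliary graph G_D on vertex set D where u,v ∈ D are adjacent iff their distance in G is at most 3. Then G_D is connected. -/
import Mathlib


/-- `D` is a dominating set of `G` (set version). -/
def IsDominatingSet {V : Type*} (G : SimpleGraph V) (D : Set V) : Prop :=
  ∀ v : V, v ∈ D ∨ ∃ u ∈ D, G.Adj u v

private lemma aux_reach_of_dist_le {V : Type*} (G : SimpleGraph V) (D : Set V)
    {a b : V} (ha : a ∈ D) (hb : b ∈ D) (h : G.dist a b ≤ 3) :
    (SimpleGraph.fromRel (fun u v : D => G.dist (u : V) (v : V) ≤ 3)).Reachable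
      ⟨a, ha⟩ ⟨b, hb⟩ := by
  by_cases hab : a = b
  · subst hab; rfl
  · exact SimpleGraph.Adj.reachable
      (by rw [SimpleGraph.fromRel_adj]
          exact ⟨fun heq => hab (congrArg Subtype.val heq), Or.inl h⟩)

private lemma aux_reach_of_walk {V : Type*} (G : SimpleGraph V) (D : Set V)
    (hD : IsDominatingSet G D) :
    ∀ n : ℕ, ∀ a b : V, ∀ ha : a ∈ D, ∀ hb : b ∈ D, ∀ p : G.Walk a b,
      p.length ≤ n →
      (SimpleGraph.fromRel (fun u v : D => G.dist (u : V) (v : V) ≤ 3)).Reachable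
        ⟨a, ha⟩ ⟨b, hb⟩ := by
  intro n
  induction n with
  | zero =>
    intro a b ha hb p hp
    exact aux_reach_of_dist_le G D ha hb
      (le_trans (SimpleGraph.dist_le p) (le_trans hp (by norm_num)))
  | succ n ih =>
    intro a b ha hb p hp
    by_cases h3 : p.length ≤ 3
    · exact aux_reach_of_dist_le G D ha hb (le_trans (SimpleGraph.dist_le p) h3)
    · -- p.length ≥ 4, so p = cons _ (cons _ q)
      cases p with
      | nil => exact absurd (by simp) h3
      | @cons _ x _ hax p' =>
      cases p' with
      | nil => exact absurd (by simp) h3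
      | @cons _ w _ hxw q =>
        simp only [SimpleGraph.Walk.length_cons] at hp h3
        -- dist a w ≤ 2
        have hdaw : G.dist a w ≤ 2 := by
          have := SimpleGraph.dist_le
            (SimpleGraph.Walk.cons hax (SimpleGraph.Walk.cons hxw SimpleGraph.Walk.nil))
          simpa using this
        rcases hD w with hwD | ⟨d, hdD, hdw⟩
        · -- w ∈ D: a ~ w in aux, and q from w to b has length ≤ n
          refine (aux_reach_of_dist_le G D ha hwD (le_trans hdaw (by norm_num))).trans ?_
          exact ih w b hwD hb q (by omega)
        · -- d ∈ D adjacent to w : dist a d ≤ 3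
          have hdad : G.dist a d ≤ 3 := by
            have := SimpleGraph.dist_le (SimpleGraph.Walk.cons hax
              (SimpleGraph.Walk.cons hxw hdw.symm.toWalk))
            simpa using this
          refine (aux_reach_of_dist_le G D ha hdD hdad).trans ?_
          exact ih d b hdD hb (SimpleGraph.Walk.cons hdw q)
            (by simp [SimpleGraph.Walk.length_cons]; omega)

theorem auxGraph_of_dominatingSet_connected
    {V : Type*} [Fintype V] (G : SimpleGraph V) (hG : G.Connected)
    (D : Set V) (hD : IsDominatingSet G D) :
    (SimpleGraph.fromRel (fun u v : D => G.dist (u : V) (v : V) ≤ 3)).Connected := by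
  have hne : Nonempty D := by
    obtain ⟨v⟩ := hG.nonempty
    rcases hD v with hv | ⟨u, hu, _⟩
    · exact ⟨⟨v, hv⟩⟩
    · exact ⟨⟨u, hu⟩⟩
  rw [SimpleGraph.connected_iff]
  refine ⟨fun ⟨a, ha⟩ ⟨b, hb⟩ => ?_, hne⟩
  obtain ⟨p⟩ := hG.preconnected a b
  exact aux_reach_of_walk G D hD p.length a b ha hb p le_rfl
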